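/- The vector fields X3, X13 = [X1,X3], and X313 = [X3,[X1,X3]] of the x-characteristic ring of u_{xy} = v_x, v_{xy} = 12 u u_x are linearly independent over the ring of smooth functions of the jet variables: there are no functions α, β of (u, v, u1, v1, u2, v2, …) with X313 = α X3 + β X13. -/
import Mathlib


/-- Jet variables for the system `u_{xy} = v_x`, `v_{xy} = 12 u u_x`:
`uu k` is `u_k` (with `uu 0 = u`) and `vv k` is `v_k` (with `vv 0 = v`). -/
abbrev J : Type := Fin 2 × ℕ

/-- The variable `u_k`. -/
def uu (k : ℕ) : J := (0, k)

/-- The variable `v_k`. -/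
def vv (k : ℕ) : J := (1, k)

/-- Partial derivative of `f` with respect to coordinate `i` at the point `z`. -/
noncomputable def pd {ι : Type*} [DecidableEq ι] (i : ι) (f : (ι → ℝ) → ℝ) (z : ι → ℝ) : ℝ :=
  deriv (fun t => f (Function.update z i t)) (z i)

/-- A function of the jet variables depending smoothly on finitely many of them. -/
def SmoothCyl {ι : Type*} (f : (ι → ℝ) → ℝ) : Prop :=
  ∃ (n : ℕ) (v : Fin n → ι) (g : (Fin n → ℝ) → ℝ),
    ContDiff ℝ (⊤ : ℕ∞) g ∧ ∀ z, f z = g fun k => z (v k)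

/-- The total `x`-derivative `X = u1 ∂/∂u + v1 ∂/∂v + u2 ∂/∂u1 + v2 ∂/∂v1 + …`. -/
noncomputable def Xop (f : (J → ℝ) → ℝ) (z : J → ℝ) : ℝ :=
  ∑' k : ℕ, (z (uu (k + 1)) * pd (uu k) f z + z (vv (k + 1)) * pd (vv k) f z)

/-- The coefficients `c k = X^k (u u1)` of `X3`: `c 0 = u u1`, `c (k+1) = X (c k)`. -/
noncomputable def c : ℕ → (J → ℝ) → ℝ
  | 0 => fun z => z (uu 0) * z (uu 1)
  | k + 1 => Xop (c k)

/-- The characteristic vector field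
`X3 = Σ_{k≥1} v_k ∂/∂u_k + 12 Σ_{k≥1} X^{k−1}(u u1) ∂/∂v_k`. -/
noncomputable def X3op (f : (J → ℝ) → ℝ) (z : J → ℝ) : ℝ :=
  ∑' k : ℕ, (z (vv (k + 1)) * pd (uu (k + 1)) f z + 12 * c k z * pd (vv (k + 1)) f z)

/-- `X13 = [X1, X3] = 12 Σ_{k≥1} u_k ∂/∂v_k`. -/
noncomputable def X13op (f : (J → ℝ) → ℝ) (z : J → ℝ) : ℝ :=
  12 * ∑' k : ℕ, z (uu (k + 1)) * pd (vv (k + 1)) f z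

/-- `X313 = [X3, X13] = 12 Σ_{k≥1} (v_k ∂/∂v_k − u_k ∂/∂u_k)`. -/
noncomputable def X313op (f : (J → ℝ) → ℝ) (z : J → ℝ) : ℝ :=
  12 * ∑' k : ℕ, (z (vv (k + 1)) * pd (vv (k + 1)) f z - z (uu (k + 1)) * pd (uu (k + 1)) f z)

/-- Partial derivative of a coordinate function. -/
lemma pd_coord {ι : Type*} [DecidableEq ι] (i j : ι) (z : ι → ℝ) :
    pd i (fun w => w j) z = if j = i then 1 else 0 := by
  unfold pd
  by_cases h : j = i
  · subst h
    simp
  · simp only [Function.update_apply, if_neg h]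
    simp

/-- The vector fields `X3`, `X13 = [X1,X3]` and `X313 = [X3,[X1,X3]]` of the `x`-characteristic
ring of `u_{xy} = v_x`, `v_{xy} = 12 u u_x` are linearly independent over the ring of functions
of the jet variables: there are no functions `α, β` with `X313 = α X3 + β X13`. -/
theorem stmt10 :
    ¬ ∃ A B : (J → ℝ) → ℝ, ∀ f z, X313op f z = A z * X3op f z + B z * X13op f z := by
  rintro ⟨A, B, h⟩
  set z : J → ℝ := fun j => if j = uu 1 then 1 else 0 with hz
  have huv : ∀ k : ℕ, uu k ≠ vv k ∧ vv k ≠ uu 1 := by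
    intro k
    constructor <;> simp [uu, vv, Prod.ext_iff]
  have key := h (fun w => w (uu 1)) z
  have hinj_u : ∀ k l : ℕ, (uu k = uu l) ↔ k = l := by
    intro k l; simp [uu, Prod.ext_iff]
  have h1 : X313op (fun w => w (uu 1)) z = -12 := by
    unfold X313op
    have : ∀ k : ℕ,
        (z (vv (k + 1)) * pd (vv (k + 1)) (fun w => w (uu 1)) z
          - z (uu (k + 1)) * pd (uu (k + 1)) (fun w => w (uu 1)) z)
        = if k = 0 then -1 else 0 := by
      intro k
      rw [pd_coord, pd_coord]
      rcases Nat.eq_zero_or_pos k with hk | hk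
      · subst hk
        simp [hz, uu, vv, Prod.ext_iff]
      · have hk1 : (1 : ℕ) ≠ k + 1 := by omega
        have : uu 1 ≠ uu (k + 1) := by simp [uu, Prod.ext_iff]; omega
        have h2 : uu 1 ≠ vv (k + 1) := by simp [uu, vv, Prod.ext_iff]
        rw [if_neg this, if_neg h2, if_neg (by omega : ¬ k = 0)]
        ring
    rw [tsum_congr this, tsum_eq_single 0 (by intro b hb; simp [hb])]
    norm_num
  have h3 : X3op (fun w => w (uu 1)) z = 0 := by
    unfold X3op
    have : ∀ k : ℕ,
        (z (vv (k + 1)) * pd (uu (k + 1)) (fun w => w (uu 1)) z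
          + 12 * c k z * pd (vv (k + 1)) (fun w => w (uu 1)) z) = 0 := by
      intro k
      rw [pd_coord, pd_coord]
      have h2 : uu 1 ≠ vv (k + 1) := by simp [uu, vv, Prod.ext_iff]
      rw [if_neg h2]
      have hzv : z (vv (k + 1)) = 0 := by
        simp [hz, uu, vv, Prod.ext_iff]
      simp [hzv]
    rw [tsum_congr this]
    simp
  have h13 : X13op (fun w => w (uu 1)) z = 0 := by
    unfold X13op
    have : ∀ k : ℕ,
        z (uu (k + 1)) * pd (vv (k + 1)) (fun w => w (uu 1)) z = 0 := by
      intro k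
      rw [pd_coord]
      have h2 : uu 1 ≠ vv (k + 1) := by simp [uu, vv, Prod.ext_iff]
      rw [if_neg h2]
      ring
    rw [tsum_congr this]
    simp
  rw [h1, h3, h13] at key
  norm_num at key
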